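/- Asymptotic form of the Proposition: fix Q ≥ 1, m ≥ 2 and a sequence of count vectors (n_1^{(k)},...,n_Q^{(k)}) with totals N_k → ∞ and with H_k/N_k bounded below by a positive constant, where H_k = max_i n_i^{(k)}. Then I_{m}^{(k)} / (Z_m^{(k)} / (Z_1^{(k)})^m) → 1 as k → ∞, where I_m^{(k)} = Q^{m-1} Σ_i (n_i^{(k)})^{(m)} / N_k^{(m)} and Z_q^{(k)} = Q^{-1} Σ_i (n_i^{(k)})^q. -/

import Mathlib

/-!
With `S = Σ nᵢ^{(m)}`, `T = Σ nᵢ^m` and `D = N^{(m)}`, the powers of `Q` cancel and the ratio is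
`(S / T) / (D / N^m)`. Termwise `n^m - n^{(m)} ≤ C(m,2) n^{m-1}`, so `T - S ≤ C(m,2) N^{m-1}`,
while `T ≥ H^m ≥ (cN)^m`; hence `1 - C(m,2) / (c^m N) ≤ S / T ≤ 1`, and both factors tend to `1`
(the second is the case of a single count, with `c = 1`).
-/

open Filter Topology Finset

theorem pow_sub_descFactorial_le (n m : ℕ) :
    (n : ℝ) ^ (m + 1) - n.descFactorial (m + 1) ≤ (m + 1).choose 2 * (n : ℝ) ^ m := by
  induction m with
  | zero => simp
  | succ m ih =>
    have hsub : (n : ℝ) ≤ ((n - (m + 1) : ℕ) : ℝ) + (m + 1) := by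
      exact_mod_cast (show n ≤ n - (m + 1) + (m + 1) by omega)
    have hstep : ((n : ℝ) - (m + 1)) * n.descFactorial (m + 1) ≤ n.descFactorial (m + 2) := by
      rw [Nat.descFactorial_succ n (m + 1), Nat.cast_mul]
      gcongr
      linarith
    have hle : (n.descFactorial (m + 1) : ℝ) ≤ (n : ℝ) ^ (m + 1) := by
      exact_mod_cast Nat.descFactorial_le_pow n (m + 1)
    have hchoose : ((m + 2).choose 2 : ℝ) = (m + 1).choose 2 + (m + 1) := by
      rw [Nat.choose_succ_succ', Nat.choose_one_right]; push_cast; ring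
    calc (n : ℝ) ^ (m + 2) - n.descFactorial (m + 2)
        ≤ n * ((n : ℝ) ^ (m + 1) - n.descFactorial (m + 1))
            + (m + 1) * n.descFactorial (m + 1) := by
          linarith [show (n : ℝ) ^ (m + 2) = n * n ^ (m + 1) by ring]
      _ ≤ n * ((m + 1).choose 2 * (n : ℝ) ^ m) + (m + 1) * (n : ℝ) ^ (m + 1) := by
          gcongr
      _ = (m + 2).choose 2 * (n : ℝ) ^ (m + 1) := by
          rw [hchoose]; ring

variable {ι : Type*}

theorem Finset.sum_pow_le_pow_sum_of_nonneg {R : Type*} [Semiring R] [PartialOrder R]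
    [IsOrderedRing R] {s : Finset ι} {f : ι → R} (hf : ∀ i ∈ s, 0 ≤ f i) {m : ℕ} (hm : m ≠ 0) :
    ∑ i ∈ s, f i ^ m ≤ (∑ i ∈ s, f i) ^ m := by
  obtain ⟨m, rfl⟩ := Nat.exists_eq_succ_of_ne_zero hm
  calc ∑ i ∈ s, f i ^ (m + 1) ≤ ∑ i ∈ s, f i * (∑ j ∈ s, f j) ^ m := by
        refine sum_le_sum fun i hi => ?_
        rw [pow_succ']
        gcongr
        exacts [hf i hi, hf i hi, single_le_sum hf hi]
    _ = (∑ i ∈ s, f i) ^ (m + 1) := by rw [← sum_mul, pow_succ']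

theorem sum_pow_sub_sum_descFactorial_le (s : Finset ι) (f : ι → ℕ) (m : ℕ) :
    ∑ i ∈ s, (f i : ℝ) ^ (m + 1) - ∑ i ∈ s, ((f i).descFactorial (m + 1) : ℝ)
      ≤ (m + 1).choose 2 * (∑ i ∈ s, (f i : ℝ)) ^ m := by
  rcases eq_or_ne m 0 with rfl | hm
  · simp
  have hpow := sum_pow_le_pow_sum_of_nonneg (s := s) (f := fun i => (f i : ℝ))
    (fun i _ => Nat.cast_nonneg _) hm
  calc _ = ∑ i ∈ s, ((f i : ℝ) ^ (m + 1) - (f i).descFactorial (m + 1)) := by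
        rw [sum_sub_distrib]
    _ ≤ ∑ i ∈ s, (m + 1).choose 2 * (f i : ℝ) ^ m := by
        gcongr with i; exact pow_sub_descFactorial_le (f i) m
    _ ≤ _ := by
        rw [← mul_sum]; gcongr

theorem one_sub_div_le_sum_descFactorial_div_sum_pow (s : Finset ι) (f : ι → ℕ) (m : ℕ)
    {c : ℝ} (hc : 0 < c) {i : ι} (hi : i ∈ s) (hfi : c * ∑ j ∈ s, (f j : ℝ) ≤ f i)
    (hpos : 0 < ∑ j ∈ s, (f j : ℝ)) :
    1 - (m + 1).choose 2 / (c ^ (m + 1) * ∑ j ∈ s, (f j : ℝ))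
      ≤ (∑ j ∈ s, ((f j).descFactorial (m + 1) : ℝ)) / ∑ j ∈ s, (f j : ℝ) ^ (m + 1) := by
  set N := ∑ j ∈ s, (f j : ℝ)
  set T := ∑ j ∈ s, (f j : ℝ) ^ (m + 1)
  have hT : (c * N) ^ (m + 1) ≤ T := calc
    (c * N) ^ (m + 1) ≤ (f i : ℝ) ^ (m + 1) := by gcongr
    _ ≤ T := single_le_sum (f := fun j => (f j : ℝ) ^ (m + 1)) (fun j _ => by positivity) hi
  have hcN : 0 < (c * N) ^ (m + 1) := by positivity
  rw [sub_le_comm, one_sub_div (hcN.trans_le hT).ne']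
  calc (T - ∑ j ∈ s, ((f j).descFactorial (m + 1) : ℝ)) / T
      ≤ (m + 1).choose 2 * N ^ m / (c * N) ^ (m + 1) :=
        div_le_div₀ (by positivity) (sum_pow_sub_sum_descFactorial_le s f m) hcN hT
    _ = (m + 1).choose 2 / (c ^ (m + 1) * N) := by
        field_simp; ring

theorem tendsto_sum_descFactorial_div_sum_pow [Fintype ι] (f : ℕ → ι → ℕ) (m : ℕ)
    (hf : Tendsto (fun k => ∑ i, f k i) atTop atTop) {c : ℝ} (hc : 0 < c)
    (hmax : ∀ k, ∃ i, c * ∑ j, (f k j : ℝ) ≤ f k i) :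
    Tendsto (fun k => (∑ i, ((f k i).descFactorial (m + 1) : ℝ)) / ∑ i, (f k i : ℝ) ^ (m + 1))
      atTop (𝓝 1) := by
  have hN : Tendsto (fun k => ∑ i, (f k i : ℝ)) atTop atTop := by
    simpa only [Function.comp_def, Nat.cast_sum] using
      (tendsto_natCast_atTop_atTop (R := ℝ)).comp hf
  have hlower : Tendsto (fun k => 1 - (m + 1).choose 2 / (c ^ (m + 1) * ∑ i, (f k i : ℝ)))
      atTop (𝓝 1) := by
    simpa using tendsto_const_nhds.sub ((tendsto_const_nhds (x := ((m + 1).choose 2 : ℝ))).div_atTop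
      (hN.const_mul_atTop (by positivity)))
  refine tendsto_of_tendsto_of_tendsto_of_le_of_le' hlower tendsto_const_nhds ?_
    (Eventually.of_forall fun k => ?_)
  · filter_upwards [hN.eventually_gt_atTop 0] with k hk
    obtain ⟨i, hi⟩ := hmax k
    exact one_sub_div_le_sum_descFactorial_div_sum_pow _ _ m hc (mem_univ i) hi hk
  · exact div_le_one_of_le₀
      (sum_le_sum fun i _ => by exact_mod_cast Nat.descFactorial_le_pow _ _) (by positivity)

theorem tendsto_descFactorial_div_pow {N : ℕ → ℕ} (hN : Tendsto N atTop atTop) (m : ℕ) :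
    Tendsto (fun k => ((N k).descFactorial (m + 1) : ℝ) / (N k : ℝ) ^ (m + 1)) atTop (𝓝 1) := by
  simpa using tendsto_sum_descFactorial_div_sum_pow (ι := Unit) (fun k _ => N k) m
    (by simpa using hN) one_pos (fun k => ⟨(), by simp⟩)

/-- asymptotic form of the Proposition. If the totals `N_k → ∞` and the
maximal counts satisfy `H_k ≥ c·N_k` for some `c > 0`, then
`I_m^{(k)} / (Z_m^{(k)}/(Z₁^{(k)})^m) → 1`. -/
theorem mMorisita_asymptotic_moment_ratio (Q m : ℕ) (hQ : 0 < Q) (hm : 2 ≤ m)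
    (n : ℕ → Fin Q → ℕ)
    (N : ℕ → ℕ) (hN : ∀ k, N k = ∑ i, n k i)
    (H : ℕ → ℕ) (hH : ∀ k, H k = Finset.univ.sup (n k))
    (hNtop : Tendsto (fun k => N k) atTop atTop)
    (c : ℝ) (hc : 0 < c) (hcH : ∀ k, c * (N k : ℝ) ≤ (H k : ℝ)) :
    Tendsto (fun k =>
        ((Q : ℝ) ^ (m - 1) * (∑ i, ((n k i).descFactorial m : ℝ))
            / ((N k).descFactorial m : ℝ))
          / (((Q : ℝ)⁻¹ * ∑ i, (n k i : ℝ) ^ m)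
              / ((Q : ℝ)⁻¹ * ∑ i, (n k i : ℝ)) ^ m))
      atTop (nhds 1) := by
  obtain ⟨p, rfl⟩ : ∃ p, m = p + 1 := ⟨m - 1, by omega⟩
  have hNsum (k : ℕ) : (N k : ℝ) = ∑ i, (n k i : ℝ) := by rw [hN k, Nat.cast_sum]
  have hmax (k : ℕ) : ∃ i, c * ∑ j, (n k j : ℝ) ≤ n k i := by
    have : Nonempty (Fin Q) := ⟨⟨0, hQ⟩⟩
    obtain ⟨i, -, hi⟩ := exists_mem_eq_sup univ univ_nonempty (n k)
    exact ⟨i, by rw [← hNsum, ← hi, ← hH k]; exact hcH k⟩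
  have hlim := (tendsto_sum_descFactorial_div_sum_pow n p (hNtop.congr hN) hc hmax).div
    (tendsto_descFactorial_div_pow hNtop p) one_ne_zero
  rw [div_one] at hlim
  refine hlim.congr fun k => ?_
  have hQ0 : (Q : ℝ) ≠ 0 := by positivity
  rw [Pi.div_apply, hNsum, Nat.add_sub_cancel, inv_mul_eq_div, inv_mul_eq_div, div_pow]
  field_simp
  ring
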